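/- arXiv:2410.05407 — 5 statements merged into one kernel-verified Lean document; each statement's English description precedes it below -/
import Mathlib

section
/- Let c > 0, α > 0, and let v₁ ≠ 0 and v₂ ≠ 0 be real numbers. Then there exists no real number u such that both s(2cv₁) = s(2uv₁) and s(−2αcv₂) = s(2uv₂). (This is the paper's core observation that no single inverse temperature u = 1/T can simultaneously calibrate the inlier region, which requires u = c = θ̂ᵀθ*/(σ²‖θ̂‖²), and the outlier region, which requires u = −αc.) -/
/-- The logistic sigmoid function. -/
noncomputable def sig (t : ℝ) : ℝ := 1 / (1 + Real.exp (-t))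

/-! The sigmoid is injective, so matching confidences at a nonzero logit `v` forces equal
inverse temperatures; the inlier region then gives `u = c` and the outlier region
`u = -α c`, which is impossible for `c, α > 0`. -/

lemma sig_eq_sigmoid : sig = Real.sigmoid := by
  funext t
  simp [sig, Real.sigmoid]

lemma sig_injective : Function.Injective sig :=
  sig_eq_sigmoid ▸ Real.sigmoid_injective

lemma sig_mul_right_inj {a b v : ℝ} (hv : v ≠ 0) : sig (a * v) = sig (b * v) ↔ a = b :=
  sig_injective.eq_iff.trans (mul_left_inj' hv)

/-- No single inverse temperature `u` can simultaneously calibrate the inlier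
region (which requires `u = c`) and the outlier region (which requires
`u = −αc`). -/
theorem stmt2 (c α v₁ v₂ : ℝ) (hc : 0 < c) (hα : 0 < α) (hv₁ : v₁ ≠ 0) (hv₂ : v₂ ≠ 0) :
    ¬ ∃ u : ℝ, sig (2 * c * v₁) = sig (2 * u * v₁) ∧
      sig (-2 * α * c * v₂) = sig (2 * u * v₂) := by
  rintro ⟨u, h_inlier, h_outlier⟩
  have hu_inlier : 2 * c = 2 * u := (sig_mul_right_inj hv₁).mp h_inlier
  have hu_outlier : -2 * α * c = 2 * u := (sig_mul_right_inj hv₂).mp h_outlier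
  have : 0 < α * c := mul_pos hα hc
  linarith
end

section
/- Let c > 0, α > 0, v₁ > 0, and v₂ > 0. Then there exists a constant L > 0 such that for every real number u, max(|s(2cv₁) − s(2uv₁)|, |s(−2αcv₂) − s(2uv₂)|) ≥ L; moreover, the choice u = c makes the first term |s(2cv₁) − s(2uv₁)| equal to zero. (This is the quantitative core of Theorem 1: recalibration alone incurs calibration error bounded away from zero on at least one of the two regions, while the inlier region alone can be perfectly recalibrated.) -/
lemma sig_lt_half {t : ℝ} (h : t < 0) : sig t < 1/2 := by
  unfold sig
  have h1 : 1 < Real.exp (-t) := Real.one_lt_exp_iff.2 (by linarith)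
  have h2 : (0:ℝ) < 1 + Real.exp (-t) := by positivity
  rw [div_lt_div_iff₀ h2 (by norm_num)]; linarith

lemma half_lt_sig {t : ℝ} (h : 0 < t) : 1/2 < sig t := by
  unfold sig
  have h1 : Real.exp (-t) < 1 := Real.exp_lt_one_iff.2 (by linarith)
  have h2 : (0:ℝ) < 1 + Real.exp (-t) := by positivity
  rw [div_lt_div_iff₀ (by norm_num) h2]; linarith

lemma sig_le_half {t : ℝ} (h : t ≤ 0) : sig t ≤ 1/2 := by
  unfold sig
  have h1 : 1 ≤ Real.exp (-t) := Real.one_le_exp_iff.2 (by linarith)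
  have h2 : (0:ℝ) < 1 + Real.exp (-t) := by positivity
  rw [div_le_div_iff₀ h2 (by norm_num)]; linarith

lemma half_le_sig {t : ℝ} (h : 0 ≤ t) : 1/2 ≤ sig t := by
  unfold sig
  have h1 : Real.exp (-t) ≤ 1 := Real.exp_le_one_iff.2 (by linarith)
  have h2 : (0:ℝ) < 1 + Real.exp (-t) := by positivity
  rw [div_le_div_iff₀ (by norm_num) h2]; linarith

/-- Recalibration alone incurs calibration error bounded away from zero on at
least one of the two regions, while the inlier region alone can be perfectly
recalibrated by the choice `u = c`. -/
theorem stmt3 (c α v₁ v₂ : ℝ) (hc : 0 < c) (hα : 0 < α) (hv₁ : 0 < v₁) (hv₂ : 0 < v₂) :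
    (∃ L : ℝ, 0 < L ∧ ∀ u : ℝ,
      L ≤ max |sig (2 * c * v₁) - sig (2 * u * v₁)|
            |sig (-2 * α * c * v₂) - sig (2 * u * v₂)|) ∧
    |sig (2 * c * v₁) - sig (2 * c * v₁)| = 0 := by
  have hA : 1/2 < sig (2 * c * v₁) := half_lt_sig (by positivity)
  have hB : sig (-2 * α * c * v₂) < 1/2 := sig_lt_half (by nlinarith [mul_pos (mul_pos hα hc) hv₂])
  refine ⟨⟨min (sig (2 * c * v₁) - 1/2) (1/2 - sig (-2 * α * c * v₂)),
    lt_min (by linarith) (by linarith), fun u => ?_⟩, by simp⟩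
  rcases le_or_gt u 0 with hu | hu
  · apply le_trans _ (le_max_left _ _)
    have h1 : sig (2 * u * v₁) ≤ 1/2 := sig_le_half (by nlinarith)
    have h2 := le_abs_self (sig (2 * c * v₁) - sig (2 * u * v₁))
    exact le_trans (min_le_left _ _) (by linarith)
  · apply le_trans _ (le_max_right _ _)
    have h1 : 1/2 ≤ sig (2 * u * v₂) := half_le_sig (by nlinarith)
    have h2 := neg_abs_le (sig (-2 * α * c * v₂) - sig (2 * u * v₂))
    exact le_trans (min_le_right _ _) (by cases abs_cases (sig (-2 * α * c * v₂) - sig (2 * u * v₂)) <;> linarith)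
end

section
/- Let c > 0, τ > 0, d > 0, and 0 ≤ r < d, and let u be a real number with u ≥ c + τ. Then for every v ∈ [d − r, d + r], s(2uv) − s(2cv) ≥ s(2(c+τ)(d−r)) − s(2c(d+r)). Moreover, if (c+τ)(d−r) > c(d+r), then this lower bound is strictly positive. (This is Case 1 of the paper's R-ECE lower bound: when the inverse temperature overshoots the calibrated slope c by at least τ, the calibration gap on the inlier interval is uniformly bounded below by a positive constant.) -/
lemma sig_le_sig {a b : ℝ} (h : a ≤ b) : sig a ≤ sig b := by
  unfold sig
  apply one_div_le_one_div_of_le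
  · positivity
  · have : Real.exp (-b) ≤ Real.exp (-a) := Real.exp_le_exp.mpr (by linarith)
    linarith

lemma sig_lt_sig {a b : ℝ} (h : a < b) : sig a < sig b := by
  unfold sig
  apply one_div_lt_one_div_of_lt
  · positivity
  · have : Real.exp (-b) < Real.exp (-a) := Real.exp_lt_exp.mpr (by linarith)
    linarith

/-- Case 1 of the R-ECE lower bound: when the inverse temperature overshoots
the calibrated slope `c` by at least `τ`, the calibration gap on the inlier
interval is uniformly bounded below; the bound is strictly positive when
`(c+τ)(d−r) > c(d+r)`. -/
theorem stmt5 (c τ d r u : ℝ) (hc : 0 < c) (hτ : 0 < τ) (hd : 0 < d)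
    (hr₀ : 0 ≤ r) (hr : r < d) (hu : c + τ ≤ u) :
    (∀ v ∈ Set.Icc (d - r) (d + r),
      sig (2 * (c + τ) * (d - r)) - sig (2 * c * (d + r)) ≤
        sig (2 * u * v) - sig (2 * c * v)) ∧
    ((c + τ) * (d - r) > c * (d + r) →
      0 < sig (2 * (c + τ) * (d - r)) - sig (2 * c * (d + r))) := by
  constructor
  · rintro v ⟨hv1, hv2⟩
    have h1 : sig (2 * (c + τ) * (d - r)) ≤ sig (2 * u * v) :=
      sig_le_sig (by nlinarith)
    have h2 : sig (2 * c * v) ≤ sig (2 * c * (d + r)) :=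
      sig_le_sig (by nlinarith)
    linarith
  · intro h
    have : sig (2 * c * (d + r)) < sig (2 * (c + τ) * (d - r)) :=
      sig_lt_sig (by nlinarith)
    linarith
end

section
/- Let c > 0, 0 < τ < c, d > 0, and 0 ≤ r < d, and let u be a real number with u ≤ c − τ. Then for every v ∈ [d − r, d + r], s(2cv) − s(2uv) ≥ s(2c(d−r)) − s(2(c−τ)(d+r)). Moreover, if c(d−r) > (c−τ)(d+r), then this lower bound is strictly positive. (This is Case 2 of the paper's R-ECE lower bound: when the inverse temperature undershoots the calibrated slope c by at least τ, the calibration gap on the inlier interval is uniformly bounded below by a positive constant.) -/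
lemma sig_strictMono : StrictMono sig := by
  intro a b hab
  unfold sig
  have h1 : (0:ℝ) < 1 + Real.exp (-b) := by positivity
  apply one_div_lt_one_div_of_lt h1
  have := Real.exp_lt_exp.mpr (neg_lt_neg hab)
  linarith

lemma sig_mono : Monotone sig := sig_strictMono.monotone

/-- Case 2 of the R-ECE lower bound: when the inverse temperature undershoots
the calibrated slope `c` by at least `τ`, the calibration gap on the inlier
interval is uniformly bounded below; the bound is strictly positive when
`c(d−r) > (c−τ)(d+r)`. -/
theorem stmt6 (c τ d r u : ℝ) (hc : 0 < c) (hτ₀ : 0 < τ) (hτ : τ < c) (hd : 0 < d)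
    (hr₀ : 0 ≤ r) (hr : r < d) (hu : u ≤ c - τ) :
    (∀ v ∈ Set.Icc (d - r) (d + r),
      sig (2 * c * (d - r)) - sig (2 * (c - τ) * (d + r)) ≤
        sig (2 * c * v) - sig (2 * u * v)) ∧
    (c * (d - r) > (c - τ) * (d + r) →
      0 < sig (2 * c * (d - r)) - sig (2 * (c - τ) * (d + r))) := by
  constructor
  · rintro v ⟨hv1, hv2⟩
    have hv0 : 0 < v := by linarith
    have h1 : sig (2 * c * (d - r)) ≤ sig (2 * c * v) := by
      apply sig_mono; nlinarith
    have h2 : sig (2 * u * v) ≤ sig (2 * (c - τ) * (d + r)) := by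
      apply sig_mono; nlinarith
    linarith
  · intro h
    have : sig (2 * (c - τ) * (d + r)) < sig (2 * c * (d - r)) := by
      apply sig_strictMono; nlinarith
    linarith
end

section
/- Let c > 0, α > 0, d_A > 0, d_B > 0, and weights w_A > 0, w_B > 0. Define R : ℝ → ℝ by R(u) = w_A·(s(2c·d_A) − s(2u·d_A)) + w_B·(s(2u·d_B) − s(−2αc·d_B)). If w_B·d_B·s′(2c·d_B) > w_A·d_A·s′(2c·d_A), then R′(c) > 0 and consequently there exists u < c with R(u) < R(c); in particular, u = c is not a minimizer of R. (This is the derivative argument in the proof of Theorem 2 showing that when temperature scaling is fit first on the full mixture of inlier and outlier regions, the optimal inverse temperature differs from the inlier-calibrated slope c, so subsequent selection cannot achieve zero calibration error.) -/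
/-- The derivative of the logistic sigmoid function. -/
noncomputable def sig' (t : ℝ) : ℝ := Real.exp (-t) / (1 + Real.exp (-t)) ^ 2

theorem hasDerivAt_sig (t : ℝ) : HasDerivAt sig (sig' t) t := by
  have hinner : HasDerivAt (fun t : ℝ => 1 + Real.exp (-t)) (-Real.exp (-t)) t := by
    simpa using ((Real.hasDerivAt_exp (-t)).comp t (hasDerivAt_neg t)).const_add 1
  have hsig : sig = fun t : ℝ => (1 + Real.exp (-t))⁻¹ := funext fun t => one_div _
  rw [hsig, sig']
  exact (hinner.inv (by positivity)).congr_deriv (by ring)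

theorem HasDerivAt.sig {f : ℝ → ℝ} {f' x : ℝ} (hf : HasDerivAt f f' x) :
    HasDerivAt (fun u => sig (f u)) (sig' (f x) * f') x :=
  (hasDerivAt_sig (f x)).comp x hf

theorem HasDerivAt.exists_lt_apply_lt_of_pos {f : ℝ → ℝ} {f' x : ℝ} (hf : HasDerivAt f f' x)
    (hf' : 0 < f') : ∃ u < x, f u < f x := by
  have hslope : ∀ᶠ u in nhdsWithin x (Set.Iio x), 0 < slope f x u :=
    (hasDerivAt_iff_tendsto_slope.mp hf).mono_left (nhdsLT_le_nhdsNE x)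
      |>.eventually (eventually_gt_nhds hf')
  obtain ⟨u, hpos, hu⟩ := (hslope.and self_mem_nhdsWithin).exists
  exact ⟨u, hu, (slope_pos_iff_gt hu).mp hpos⟩

theorem stmt15_general (c α dA dB wA wB : ℝ)
    (R : ℝ → ℝ)
    (hR : ∀ u : ℝ, R u = wA * (sig (2 * c * dA) - sig (2 * u * dA)) +
      wB * (sig (2 * u * dB) - sig (-2 * α * c * dB)))
    (hdom : wA * dA * sig' (2 * c * dA) < wB * dB * sig' (2 * c * dB)) :
    0 < deriv R c ∧ ∃ u : ℝ, u < c ∧ R u < R c := by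
  have hlin (d : ℝ) : HasDerivAt (fun u : ℝ => 2 * u * d) (2 * d) c := by
    simpa using ((hasDerivAt_id c).const_mul 2).mul_const d
  have hR' : HasDerivAt R (2 * (wB * dB * sig' (2 * c * dB) - wA * dA * sig' (2 * c * dA))) c := by
    rw [funext hR]
    exact ((((hasDerivAt_const c (sig (2 * c * dA))).sub (hlin dA).sig).const_mul wA).add
      (((hlin dB).sig.sub (hasDerivAt_const c (sig (-2 * α * c * dB)))).const_mul wB)).congr_deriv
      (by ring)
  have hpos : 0 < 2 * (wB * dB * sig' (2 * c * dB) - wA * dA * sig' (2 * c * dA)) := by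
    linarith
  exact ⟨hR'.deriv ▸ hpos, hR'.exists_lt_apply_lt_of_pos hpos⟩

/-- Derivative argument in the proof of Theorem 2: when the outlier term
dominates, the weighted calibration error `R` has strictly positive derivative
at the inlier-calibrated slope `c`, so `u = c` is not a minimizer of `R`. -/
theorem stmt15 (c α dA dB wA wB : ℝ) (hc : 0 < c) (hα : 0 < α) (hdA : 0 < dA)
    (hdB : 0 < dB) (hwA : 0 < wA) (hwB : 0 < wB)
    (R : ℝ → ℝ)
    (hR : ∀ u : ℝ, R u = wA * (sig (2 * c * dA) - sig (2 * u * dA)) +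
      wB * (sig (2 * u * dB) - sig (-2 * α * c * dB)))
    (hdom : wA * dA * sig' (2 * c * dA) < wB * dB * sig' (2 * c * dB)) :
    0 < deriv R c ∧ ∃ u : ℝ, u < c ∧ R u < R c :=
  stmt15_general c α dA dB wA wB R hR hdom
end
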